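/- Let T=(V,E,γ,p) be a fault tree, v ∈ V a gate, and for each node w let D_w = {b ∈ BE(T) : b ⪯ w} be the set of BE-descendants of w. Assume the sets D_w, w ∈ ch(v), are pairwise disjoint. Write P_u = Σ_{f ∈ {0,1}^{BE(T)}: struc_T(u,f)=1} ∏_{b: f_b=1} p(b) ∏_{b: f_b=0}(1−p(b)) for each node u. If γ(v)=AND then P_v = ∏_{w∈ch(v)} P_w, and if γ(v)=OR then P_v = 1 − ∏_{w∈ch(v)} (1−P_w). -/
import Mathlib


open Finset

/-- Gate types of a (static) fault tree. -/
inductive Gate where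
  | OR | AND | BE
deriving DecidableEq

/-- A fault tree on a vertex type `V`: a children function (giving the edges),
a root, a gate labelling and failure probabilities for the basic events. -/
structure FT (V : Type*) where
  children : V → Finset V
  root : V
  gate : V → Gate
  p : V → ℝ

namespace FT

variable {V : Type*} [Fintype V] [DecidableEq V]

/-- The edge relation: `T.edge a b` iff there is an edge `a → b`. -/
def edge (T : FT V) (a b : V) : Prop := b ∈ T.children a

/-- `x ⪯ y` iff there is a directed path from `y` to `x`. -/
def vle (T : FT V) (x y : V) : Prop := Relation.ReflTransGen T.edge y x

/-- `x ≺ y`. -/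
def vlt (T : FT V) (x y : V) : Prop := T.vle x y ∧ x ≠ y

/-- Well-formedness of a fault tree: every node is reachable from the root,
the graph is acyclic, a node is a basic event iff it is a leaf, and failure
probabilities of basic events lie in `[0,1]`. -/
def WF (T : FT V) : Prop :=
  (∀ v, Relation.ReflTransGen T.edge T.root v) ∧
  (∀ v, ¬ Relation.TransGen T.edge v v) ∧
  (∀ v, (T.gate v = Gate.BE ↔ T.children v = ∅)) ∧
  (∀ v, T.gate v = Gate.BE → 0 ≤ T.p v ∧ T.p v ≤ 1)

/-- The set `BE(T)` of basic events. -/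
def BEs (T : FT V) : Finset V := Finset.univ.filter fun v => T.gate v = Gate.BE

/-- The structure function: `T.Fails f v` holds iff `struc_T(v,f) = 1`,
i.e. the safety event `f` propagates to the node `v`. -/
inductive Fails (T : FT V) (f : V → Bool) : V → Prop
  | be {v : V} : T.gate v = Gate.BE → f v = true → Fails T f v
  | or {v w : V} : T.gate v = Gate.OR → w ∈ T.children v → Fails T f w → Fails T f v
  | and {v : V} : T.gate v = Gate.AND → (∀ w ∈ T.children v, Fails T f w) → Fails T f v

/-- A function `V → Bool` encodes an element of `{0,1}^{BE(T)}` iff it is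
`false` outside the basic events. -/
def Normalized (T : FT V) (f : V → Bool) : Prop :=
  ∀ v, T.gate v ≠ Gate.BE → f v = false

/-- The probability weight `∏_{v : f_v = 1} p(v) ∏_{v : f_v = 0} (1 - p(v))`. -/
noncomputable def weight (T : FT V) (f : V → Bool) : ℝ :=
  ∏ v ∈ T.BEs, if f v then T.p v else 1 - T.p v

open scoped Classical in
/-- The set `CS(T)` of cut sets (as normalized Boolean vectors). -/
noncomputable def cutSets (T : FT V) : Finset (V → Bool) :=
  Finset.univ.filter fun f => T.Normalized f ∧ T.Fails f T.root

/-- The unreliability `U(T)`. -/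
noncomputable def unrel (T : FT V) : ℝ := ∑ f ∈ T.cutSets, T.weight f

/-- `f` is a minimal cut set. -/
def MinCut (T : FT V) (f : V → Bool) : Prop :=
  T.Normalized f ∧ T.Fails f T.root ∧
  ∀ g : V → Bool, T.Normalized g → T.Fails g T.root → (∀ v, g v ≤ f v) → g = f

end FT

open FT

variable {V : Type*} [Fintype V] [DecidableEq V]

open scoped Classical in
/-- The failure probability `P_u` of a node `u`:
`P_u = Σ_{f ∈ {0,1}^{BE(T)} : struc_T(u,f) = 1} ∏_{b : f_b = 1} p(b) ∏_{b : f_b = 0} (1 - p(b))`. -/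
noncomputable def FT.failProb (T : FT V) (u : V) : ℝ :=
  ∑ f ∈ Finset.univ.filter (fun f : V → Bool => T.Normalized f ∧ T.Fails f u),
    T.weight f

section Aux

open scoped Classical

variable {V : Type*} [Fintype V] [DecidableEq V]

/-- Boolean vectors supported on `U`. -/
noncomputable def NFset (U : Finset V) : Finset (V → Bool) :=
  Finset.univ.filter fun f => ∀ v, v ∉ U → f v = false

lemma mem_NFset {U : Finset V} {f : V → Bool} :
    f ∈ NFset U ↔ ∀ v, v ∉ U → f v = false := by
  simp [NFset]

/-- The weight of a Boolean vector restricted to `U`. -/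
noncomputable def wgt (T : FT V) (U : Finset V) (f : V → Bool) : ℝ :=
  ∏ v ∈ U, if f v then T.p v else 1 - T.p v

lemma sum_wgt (T : FT V) (U : Finset V) : ∑ f ∈ NFset U, wgt T U f = 1 := by
  classical
  have h1 : ∑ f ∈ NFset U, wgt T U f
      = ∑ t ∈ U.powerset, ∏ v ∈ U, (if v ∈ t then T.p v else 1 - T.p v) := by
    refine Finset.sum_nbij' (fun f => U.filter (fun v => f v = true))
      (fun t => fun v => decide (v ∈ t)) ?_ ?_ ?_ ?_ ?_
    · intro f _; exact Finset.mem_powerset.2 (Finset.filter_subset _ _)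
    · intro t ht
      rw [mem_NFset]
      intro v hv
      simp only [decide_eq_false_iff_not]
      exact fun hvt => hv (Finset.mem_powerset.1 ht hvt)
    · intro f hf
      funext v
      by_cases hv : v ∈ U
      · by_cases hfv : f v = true <;> simp [hv, hfv]
      · simp [hv, mem_NFset.1 hf v hv]
    · intro t ht
      ext v
      simp only [Finset.mem_filter, decide_eq_true_eq]
      exact ⟨fun h => h.2, fun h => ⟨Finset.mem_powerset.1 ht h, h⟩⟩
    · intro f hf
      unfold wgt
      refine Finset.prod_congr rfl fun v hv => ?_
      by_cases hfv : f v = true <;> simp [hfv, hv]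
  rw [h1]
  have h2 : ∀ t ∈ U.powerset, ∏ v ∈ U, (if v ∈ t then T.p v else 1 - T.p v)
      = (∏ v ∈ t, T.p v) * ∏ v ∈ U \ t, (1 - T.p v) := by
    intro t ht
    rw [Finset.prod_ite]
    congr 1
    · congr 1
      ext v
      simp only [Finset.mem_filter]
      exact ⟨fun h => h.2, fun h => ⟨Finset.mem_powerset.1 ht h, h⟩⟩
    · congr 1
      ext v
      simp [Finset.mem_sdiff, Finset.mem_filter]
  rw [Finset.sum_congr rfl h2, ← Finset.prod_add]
  simp

lemma sum_split (T : FT V) {S U : Finset V} (hSU : S ⊆ U) (F : (V → Bool) → ℝ) :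
    ∑ f ∈ NFset U, F f
      = ∑ a ∈ NFset S, ∑ b ∈ NFset (U \ S), F (fun v => a v || b v) := by
  classical
  rw [← Finset.sum_product']
  refine Finset.sum_nbij'
    (fun f => ((fun v => f v && decide (v ∈ S)), (fun v => f v && decide (v ∈ U \ S))))
    (fun p => fun v => p.1 v || p.2 v) ?_ ?_ ?_ ?_ ?_
  · intro f _
    rw [Finset.mem_product]
    constructor <;> (rw [mem_NFset]; intro v hv; simp [hv])
  · intro p hp
    rw [Finset.mem_product] at hp
    rw [mem_NFset]
    intro v hv
    show (p.1 v || p.2 v) = false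
    rw [mem_NFset.1 hp.1 v (fun h => hv (hSU h)),
      mem_NFset.1 hp.2 v (by simp [hv]), Bool.or_false]
  · intro f hf
    funext v
    by_cases hS : v ∈ S
    · simp [hS, hSU hS]
    · by_cases hU : v ∈ U
      · simp [hS, hU]
      · simp [hS, hU, mem_NFset.1 hf v hU]
  · intro p hp
    rw [Finset.mem_product] at hp
    ext : 1 <;> funext v
    · by_cases hS : v ∈ S
      · simp [hS, mem_NFset.1 hp.2 v (by simp [hS])]
      · simp [hS, mem_NFset.1 hp.1 v hS]
    · by_cases hU : v ∈ U \ S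
      · have : v ∉ S := (Finset.mem_sdiff.1 hU).2
        simp [hU, mem_NFset.1 hp.1 v this]
      · simp [hU, mem_NFset.1 hp.2 v hU]
  · intro f hf
    congr 1
    funext v
    by_cases hS : v ∈ S
    · simp [hS, hSU hS]
    · by_cases hU : v ∈ U
      · simp [hS, hU]
      · simp [hS, hU, mem_NFset.1 hf v hU]

lemma wgt_split (T : FT V) {S U : Finset V} (hSU : S ⊆ U) {a b : V → Bool}
    (ha : a ∈ NFset S) (hb : b ∈ NFset (U \ S)) :
    wgt T U (fun v => a v || b v) = wgt T S a * wgt T (U \ S) b := by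
  classical
  unfold wgt
  rw [← Finset.prod_sdiff hSU, mul_comm]
  congr 1
  · refine Finset.prod_congr rfl fun v hv => ?_
    show (if a v || b v then T.p v else 1 - T.p v) = _
    rw [mem_NFset.1 hb v (by simp [hv]), Bool.or_false]
  · refine Finset.prod_congr rfl fun v hv => ?_
    show (if a v || b v then T.p v else 1 - T.p v) = _
    rw [mem_NFset.1 ha v (Finset.mem_sdiff.1 hv).2, Bool.false_or]

lemma factor_pair (T : FT V) {S U : Finset V} (hSU : S ⊆ U) (g h : (V → Bool) → ℝ)
    (hg : ∀ f f' : V → Bool, (∀ v ∈ S, f v = f' v) → g f = g f')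
    (hh : ∀ f f' : V → Bool, (∀ v, v ∉ S → f v = f' v) → h f = h f') :
    ∑ f ∈ NFset U, wgt T U f * (g f * h f)
      = (∑ f ∈ NFset U, wgt T U f * g f) * (∑ f ∈ NFset U, wgt T U f * h f) := by
  classical
  have hga : ∀ a ∈ NFset S, ∀ b ∈ NFset (U \ S), g (fun v => a v || b v) = g a := by
    intro a _ b hb
    refine hg _ _ fun v hv => ?_
    rw [mem_NFset.1 hb v (by simp [hv]), Bool.or_false]
  have hhb : ∀ a ∈ NFset S, ∀ b ∈ NFset (U \ S), h (fun v => a v || b v) = h b := by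
    intro a ha b _
    refine hh _ _ fun v hv => ?_
    rw [mem_NFset.1 ha v hv, Bool.false_or]
  have key : ∀ G H : (V → Bool) → ℝ,
      (∀ a ∈ NFset S, ∀ b ∈ NFset (U \ S), G (fun v => a v || b v) = G a) →
      (∀ a ∈ NFset S, ∀ b ∈ NFset (U \ S), H (fun v => a v || b v) = H b) →
      ∑ f ∈ NFset U, wgt T U f * (G f * H f)
        = (∑ a ∈ NFset S, wgt T S a * G a) * (∑ b ∈ NFset (U \ S), wgt T (U \ S) b * H b) := by
    intro G H hG hH
    rw [sum_split T hSU (fun f => wgt T U f * (G f * H f)), Finset.sum_mul_sum]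
    refine Finset.sum_congr rfl fun a ha => Finset.sum_congr rfl fun b hb => ?_
    rw [wgt_split T hSU ha hb, hG a ha b hb, hH a ha b hb]
    ring
  have e1 := key g h hga hhb
  have e2 := key g (fun _ => 1) hga (fun _ _ _ _ => rfl)
  have e3 := key (fun _ => 1) h (fun _ _ _ _ => rfl) hhb
  simp only [mul_one, one_mul] at e2 e3
  rw [e1, e2, e3, sum_wgt, sum_wgt]
  ring

lemma factor_prod (T : FT V) (U : Finset V) (D : V → Finset V) (χ : V → (V → Bool) → ℝ) :
    ∀ C : Finset V, (∀ w ∈ C, D w ⊆ U) →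
      (∀ w₁ ∈ C, ∀ w₂ ∈ C, w₁ ≠ w₂ → Disjoint (D w₁) (D w₂)) →
      (∀ w ∈ C, ∀ f f' : V → Bool, (∀ v ∈ D w, f v = f' v) → χ w f = χ w f') →
      ∑ f ∈ NFset U, wgt T U f * ∏ w ∈ C, χ w f
        = ∏ w ∈ C, ∑ f ∈ NFset U, wgt T U f * χ w f := by
  classical
  intro C
  induction C using Finset.induction_on with
  | empty => intro _ _ _; simp [sum_wgt]
  | @insert w C hw ih =>
    intro hD hdisj hχ
    simp only [Finset.prod_insert hw]
    have hrec := ih (fun w' hw' => hD w' (Finset.mem_insert_of_mem hw'))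
      (fun w₁ h₁ w₂ h₂ hne => hdisj w₁ (Finset.mem_insert_of_mem h₁) w₂
        (Finset.mem_insert_of_mem h₂) hne)
      (fun w' hw' => hχ w' (Finset.mem_insert_of_mem hw'))
    have hpair := factor_pair T (hD w (Finset.mem_insert_self w C)) (χ w)
      (fun f => ∏ w' ∈ C, χ w' f)
      (hχ w (Finset.mem_insert_self w C))
      (by
        intro f f' hff
        refine Finset.prod_congr rfl fun w' hw' => ?_
        refine hχ w' (Finset.mem_insert_of_mem hw') f f' fun u hu => ?_
        refine hff u fun hu' => ?_
        have hne : w ≠ w' := fun he => hw (he ▸ hw')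
        exact (Finset.disjoint_left.1 (hdisj w (Finset.mem_insert_self w C) w'
          (Finset.mem_insert_of_mem hw') hne)) hu' hu)
    calc ∑ f ∈ NFset U, wgt T U f * (χ w f * ∏ w' ∈ C, χ w' f)
        = (∑ f ∈ NFset U, wgt T U f * χ w f)
            * (∑ f ∈ NFset U, wgt T U f * ∏ w' ∈ C, χ w' f) := hpair
      _ = _ := by rw [hrec]

lemma fails_congr (T : FT V) {f f' : V → Bool} {u : V} (hf : T.Fails f u)
    (h : ∀ b ∈ T.BEs, T.vle b u → f b = f' b) : T.Fails f' u := by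
  induction hf with
  | @be v hbe hft =>
    refine FT.Fails.be hbe ?_
    rw [← h v (by simp [FT.BEs, hbe]) Relation.ReflTransGen.refl]
    exact hft
  | @or v w hor hw _ ih =>
    exact FT.Fails.or hor hw (ih fun b hb hbw =>
      h b hb (Relation.ReflTransGen.head hw hbw))
  | @and v hand _ ih =>
    exact FT.Fails.and hand fun w hwc => ih w hwc fun b hb hbw =>
      h b hb (Relation.ReflTransGen.head hwc hbw)

lemma fails_and_iff (T : FT V) {f : V → Bool} {v : V} (hv : T.gate v = Gate.AND) :
    T.Fails f v ↔ ∀ w ∈ T.children v, T.Fails f w := by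
  constructor
  · intro h
    cases h with
    | be h _ => rw [hv] at h; cases h
    | or h _ _ => rw [hv] at h; cases h
    | and _ h => exact h
  · exact fun h => FT.Fails.and hv h

lemma fails_or_iff (T : FT V) {f : V → Bool} {v : V} (hv : T.gate v = Gate.OR) :
    T.Fails f v ↔ ∃ w ∈ T.children v, T.Fails f w := by
  constructor
  · intro h
    cases h with
    | be h _ => rw [hv] at h; cases h
    | or _ hw hfw => exact ⟨_, hw, hfw⟩
    | and h _ => rw [hv] at h; cases h
  · rintro ⟨w, hw, hfw⟩
    exact FT.Fails.or hv hw hfw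

lemma failProb_eq (T : FT V) (u : V) :
    T.failProb u = ∑ f ∈ NFset T.BEs,
      wgt T T.BEs f * (if T.Fails f u then (1 : ℝ) else 0) := by
  classical
  have hnorm : ∀ f : V → Bool, f ∈ NFset T.BEs ↔ T.Normalized f := by
    intro f
    rw [mem_NFset]
    unfold FT.Normalized
    constructor
    · intro h v hv; exact h v (by simp [FT.BEs, hv])
    · intro h v hv; exact h v (by simpa [FT.BEs] using hv)
  rw [FT.failProb]
  have hset : Finset.univ.filter (fun f : V → Bool => T.Normalized f ∧ T.Fails f u)
      = (NFset T.BEs).filter (fun f => T.Fails f u) := by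
    ext f
    simp only [Finset.mem_filter, Finset.mem_univ, true_and, hnorm f]
  rw [hset, Finset.sum_filter]
  refine Finset.sum_congr rfl fun f _ => ?_
  by_cases h2 : T.Fails f u <;> simp [h2, FT.weight, wgt]

end Aux


/-- **Statement 18.** Correctness of the bottom-up algorithm at a gate `v`
whose children have pairwise disjoint sets of BE-descendants:
if `γ(v) = AND` then `P_v = ∏_{w ∈ ch(v)} P_w`, and if `γ(v) = OR` then
`P_v = 1 - ∏_{w ∈ ch(v)} (1 - P_w)`. -/
theorem failProb_gate (T : FT V) (hT : T.WF) (v : V) (hv : T.gate v ≠ Gate.BE)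
    (hdisj : ∀ w₁ ∈ T.children v, ∀ w₂ ∈ T.children v, w₁ ≠ w₂ →
      ∀ b ∈ T.BEs, T.vle b w₁ → T.vle b w₂ → False) :
    (T.gate v = Gate.AND → T.failProb v = ∏ w ∈ T.children v, T.failProb w) ∧
    (T.gate v = Gate.OR →
      T.failProb v = 1 - ∏ w ∈ T.children v, (1 - T.failProb w)) := by
  classical
  set D : V → Finset V := fun w => T.BEs.filter (fun b => T.vle b w) with hDdef
  have hD : ∀ w ∈ T.children v, D w ⊆ T.BEs := fun w _ => Finset.filter_subset _ _
  have hdisj' : ∀ w₁ ∈ T.children v, ∀ w₂ ∈ T.children v, w₁ ≠ w₂ →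
      Disjoint (D w₁) (D w₂) := by
    intro w₁ h₁ w₂ h₂ hne
    rw [Finset.disjoint_left]
    intro b hb1 hb2
    rw [hDdef, Finset.mem_filter] at hb1 hb2
    exact hdisj w₁ h₁ w₂ h₂ hne b hb1.1 hb1.2 hb2.2
  have hdep : ∀ w, ∀ f f' : V → Bool, (∀ u ∈ D w, f u = f' u) →
      (T.Fails f w ↔ T.Fails f' w) := by
    intro w f f' hff
    have h' : ∀ b ∈ T.BEs, T.vle b w → f b = f' b := fun b hb hbw =>
      hff b (by rw [hDdef]; exact Finset.mem_filter.2 ⟨hb, hbw⟩)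
    exact ⟨fun h => fails_congr T h h',
      fun h => fails_congr T h (fun b hb hbw => (h' b hb hbw).symm)⟩
  constructor
  · intro hand
    rw [failProb_eq]
    have step : ∀ f ∈ NFset T.BEs,
        wgt T T.BEs f * (if T.Fails f v then (1 : ℝ) else 0)
          = wgt T T.BEs f * ∏ w ∈ T.children v,
              (if T.Fails f w then (1 : ℝ) else 0) := by
      intro f _
      rw [Finset.prod_boole]
      congr 1
      by_cases h : T.Fails f v
      · rw [if_pos h, if_pos ((fails_and_iff T hand).mp h)]
      · have hnall : ¬ ∀ w ∈ T.children v, T.Fails f w :=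
          fun hh => h ((fails_and_iff T hand).mpr hh)
        rw [if_neg h, if_neg hnall]
    rw [Finset.sum_congr rfl step,
      factor_prod T T.BEs D (fun w f => if T.Fails f w then (1 : ℝ) else 0)
        (T.children v) hD hdisj'
        (fun w _ f f' hff => if_congr (hdep w f f' hff) rfl rfl)]
    exact Finset.prod_congr rfl fun w _ => (failProb_eq T w).symm
  · intro hor
    rw [failProb_eq]
    have step : ∀ f ∈ NFset T.BEs,
        wgt T T.BEs f * (if T.Fails f v then (1 : ℝ) else 0)
          = wgt T T.BEs f - wgt T T.BEs f * ∏ w ∈ T.children v,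
              ((1 : ℝ) - if T.Fails f w then (1 : ℝ) else 0) := by
      intro f _
      have h1 : ∀ w, ((1 : ℝ) - if T.Fails f w then (1 : ℝ) else 0)
          = if ¬ T.Fails f w then (1 : ℝ) else 0 := by
        intro w; by_cases h : T.Fails f w <;> simp [h]
      rw [show (∏ w ∈ T.children v, ((1 : ℝ) - if T.Fails f w then (1 : ℝ) else 0))
          = ∏ w ∈ T.children v, (if ¬ T.Fails f w then (1 : ℝ) else 0) from
          Finset.prod_congr rfl fun w _ => h1 w, Finset.prod_boole]
      by_cases h : T.Fails f v
      · obtain ⟨w, hw, hfw⟩ := (fails_or_iff T hor).mp h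
        have hnall : ¬ ∀ w ∈ T.children v, ¬ T.Fails f w := fun hh => hh w hw hfw
        rw [if_pos h, if_neg hnall]
        ring
      · have hall : ∀ w ∈ T.children v, ¬ T.Fails f w :=
          fun w hw hfw => h (FT.Fails.or hor hw hfw)
        rw [if_neg h, if_pos hall]
        ring
    rw [Finset.sum_congr rfl step, Finset.sum_sub_distrib, sum_wgt,
      factor_prod T T.BEs D
        (fun w f => (1 : ℝ) - if T.Fails f w then (1 : ℝ) else 0)
        (T.children v) hD hdisj'
        (fun w _ f f' hff => by
          show (1 : ℝ) - (if T.Fails f w then (1 : ℝ) else 0)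
              = 1 - (if T.Fails f' w then (1 : ℝ) else 0)
          rw [if_congr (hdep w f f' hff) rfl rfl])]
    congr 1
    refine Finset.prod_congr rfl fun w _ => ?_
    have hw1 : ∑ f ∈ NFset T.BEs,
        wgt T T.BEs f * ((1 : ℝ) - if T.Fails f w then (1 : ℝ) else 0)
          = 1 - ∑ f ∈ NFset T.BEs,
              wgt T T.BEs f * (if T.Fails f w then (1 : ℝ) else 0) := by
      simp only [mul_sub, mul_one]
      rw [Finset.sum_sub_distrib, sum_wgt]
    rw [hw1, failProb_eq]
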